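/- Let (Ω, 𝓕, P) be a probability space, K ≥ 2, and let Z : Ω → Fin K, X, Y, Y₀, Y₁ : Ω → Bool and a family XZ : Fin K → Ω → Bool be measurable, satisfying consistency and X-consistency, with P(Z = z) > 0 for every z. Assume that for every z : Fin K and i : Bool, the pair ⟨XZ z, Y_i⟩ is independent of Z (IndepFun), where Y_i := if i then Y₁ else Y₀. For i, j : Bool define g(i, j) := the minimum of the numbers P[{X = i} ∩ {Y = j} | {Z = z}] + P[{X = !i} | {Z = z}] over z : Fin K together with the numbers P[{X = i} ∩ {Y = j} | {Z = z}] + P[{X = !i} ∩ {Y = false} | {Z = z}] + P[{X = i} ∩ {Y = j} | {Z = z̃}] + P[{X = !i} ∩ {Y = true} | {Z = z̃}] over ordered pairs z ≠ z̃ in Fin K. Then 1 − g(true, false) − g(false, true) ≤ P(Y₁ = true) − P(Y₀ = true) ≤ g(false, false) + g(true, true) − 1. -/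

import Mathlib

open MeasureTheory ProbabilityTheory

/-- Conditional probability `P(A | B)` as a real number. -/
noncomputable def condPr {Ω : Type*} [MeasurableSpace Ω] (P : Measure Ω) (A B : Set Ω) : ℝ :=
  (P[A | B]).toReal

lemma univ_nonempty_of_two_le {K : ℕ} (hK : 2 ≤ K) :
    (Finset.univ : Finset (Fin K)).Nonempty :=
  ⟨⟨0, by omega⟩, Finset.mem_univ _⟩

lemma offDiag_nonempty_of_two_le {K : ℕ} (hK : 2 ≤ K) :
    ((Finset.univ : Finset (Fin K)).offDiag).Nonempty :=
  ⟨(⟨0, by omega⟩, ⟨1, by omega⟩),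
    Finset.mem_offDiag.mpr ⟨Finset.mem_univ _, Finset.mem_univ _, by simp [Fin.ext_iff]⟩⟩

/-- The bound `g(i, j)` of equation (gijbound): the minimum of
`P(X = i, Y = j | Z = z) + P(X = 1 − i | Z = z)` over `z` and of
`P(X = i, Y = j | Z = z) + P(X = 1 − i, Y = 0 | Z = z) + P(X = i, Y = j | Z = z̃)
 + P(X = 1 − i, Y = 1 | Z = z̃)` over ordered pairs `z ≠ z̃`. -/
noncomputable def gbnd {Ω : Type*} [MeasurableSpace Ω] (P : Measure Ω)
    {K : ℕ} (hK : 2 ≤ K) (Z : Ω → Fin K) (X Y : Ω → Bool) (i j : Bool) : ℝ :=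
  min
    (Finset.univ.inf' (univ_nonempty_of_two_le hK) fun z =>
      condPr P ({ω | X ω = i} ∩ {ω | Y ω = j}) {ω | Z ω = z}
        + condPr P {ω | X ω = !i} {ω | Z ω = z})
    (Finset.univ.offDiag.inf' (offDiag_nonempty_of_two_le hK) fun zz =>
      condPr P ({ω | X ω = i} ∩ {ω | Y ω = j}) {ω | Z ω = zz.1}
        + condPr P ({ω | X ω = !i} ∩ {ω | Y ω = false}) {ω | Z ω = zz.1}
        + condPr P ({ω | X ω = i} ∩ {ω | Y ω = j}) {ω | Z ω = zz.2}
        + condPr P ({ω | X ω = !i} ∩ {ω | Y ω = true}) {ω | Z ω = zz.2})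

/-- The ACE bounds (eq:ace-bnds) of Theorem 2:
`1 − g(1, 0) − g(0, 1) ≤ ACE(X → Y) ≤ g(0, 0) + g(1, 1) − 1`. -/
theorem iv_ace_bounds
    {Ω : Type*} [MeasurableSpace Ω] (P : Measure Ω) [IsProbabilityMeasure P]
    {K : ℕ} (hK : 2 ≤ K)
    (Z : Ω → Fin K) (X Y Y₀ Y₁ : Ω → Bool) (XZ : Fin K → Ω → Bool)
    (hZ : Measurable Z) (hX : Measurable X) (hY : Measurable Y)
    (hY₀ : Measurable Y₀) (hY₁ : Measurable Y₁) (hXZ : ∀ z, Measurable (XZ z))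
    (hcons : ∀ᵐ ω ∂P, Y ω = if X ω then Y₁ ω else Y₀ ω)
    (hXcons : ∀ᵐ ω ∂P, X ω = XZ (Z ω) ω)
    (hpos : ∀ z : Fin K, 0 < P {ω | Z ω = z})
    (hind : ∀ (z : Fin K) (i : Bool),
      IndepFun (fun ω => (XZ z ω, if i then Y₁ ω else Y₀ ω)) Z P) :
    1 - gbnd P hK Z X Y true false - gbnd P hK Z X Y false true
      ≤ (P {ω | Y₁ ω = true}).toReal - (P {ω | Y₀ ω = true}).toReal ∧
    (P {ω | Y₁ ω = true}).toReal - (P {ω | Y₀ ω = true}).toReal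
      ≤ gbnd P hK Z X Y false false + gbnd P hK Z X Y true true - 1 := by
  classical
  set W : Bool → Ω → Bool := fun i ω => if i then Y₁ ω else Y₀ ω with hW
  have hZmeas : ∀ z : Fin K, MeasurableSet {ω | Z ω = z} :=
    fun z => hZ (measurableSet_singleton z)
  have hPZ0 : ∀ z : Fin K, P {ω | Z ω = z} ≠ 0 := fun z => (hpos z).ne'
  have hPZtop : ∀ z : Fin K, P {ω | Z ω = z} ≠ ⊤ := fun z => measure_ne_top P _
  -- independence consequences
  have hind2 : ∀ (z : Fin K) (a b : Bool),
      P (({ω | XZ z ω = a} ∩ {ω | W a ω = b}) ∩ {ω | Z ω = z})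
        = P ({ω | XZ z ω = a} ∩ {ω | W a ω = b}) * P {ω | Z ω = z} := by
    intro z a b
    have h := (hind z a).measure_inter_preimage_eq_mul ({a} ×ˢ {b}) {z}
      ((measurableSet_singleton a).prod (measurableSet_singleton b))
      (measurableSet_singleton z)
    have hs : (fun ω => (XZ z ω, W a ω)) ⁻¹' ({a} ×ˢ {b})
        = {ω | XZ z ω = a} ∩ {ω | W a ω = b} := by
      ext ω; simp [Set.mem_prod, W]
    have ht : Z ⁻¹' ({z} : Set (Fin K)) = {ω | Z ω = z} := by ext ω; simp
    rw [hs, ht] at h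
    simpa [W] using h
  have hind1 : ∀ (z : Fin K) (a : Bool),
      P ({ω | XZ z ω = a} ∩ {ω | Z ω = z})
        = P {ω | XZ z ω = a} * P {ω | Z ω = z} := by
    intro z a
    have h := (hind z a).measure_inter_preimage_eq_mul (({a} : Set Bool) ×ˢ Set.univ) {z}
      ((measurableSet_singleton a).prod MeasurableSet.univ)
      (measurableSet_singleton z)
    have hs : (fun ω => (XZ z ω, W a ω)) ⁻¹' (({a} : Set Bool) ×ˢ Set.univ)
        = {ω | XZ z ω = a} := by
      ext ω; simp only [Set.mem_preimage, Set.mem_prod, Set.mem_singleton_iff, Set.mem_univ, and_true, Set.mem_setOf_eq]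
    have ht : Z ⁻¹' ({z} : Set (Fin K)) = {ω | Z ω = z} := by ext ω; simp
    rw [hs, ht] at h
    simpa [W] using h
  -- a.e. set identities on {Z = z}
  have hae2 : ∀ (z : Fin K) (a b : Bool),
      P ({ω | Z ω = z} ∩ ({ω | X ω = a} ∩ {ω | Y ω = b}))
        = P ({ω | Z ω = z} ∩ ({ω | XZ z ω = a} ∩ {ω | W a ω = b})) := by
    intro z a b
    apply measure_congr
    rw [Filter.eventuallyEq_set]
    filter_upwards [hcons, hXcons] with ω h1 h2
    simp only [Set.mem_inter_iff, Set.mem_setOf_eq]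
    constructor
    · rintro ⟨hz, hx, hy⟩
      rw [hz] at h2
      refine ⟨hz, h2 ▸ hx, ?_⟩
      rw [← hy, h1, hx]
    · rintro ⟨hz, hx, hy⟩
      rw [hz] at h2
      have hxa : X ω = a := h2.trans hx
      refine ⟨hz, hxa, ?_⟩
      rw [h1, hxa, ← hy]
  have hae1 : ∀ (z : Fin K) (a : Bool),
      P ({ω | Z ω = z} ∩ {ω | X ω = a})
        = P ({ω | Z ω = z} ∩ {ω | XZ z ω = a}) := by
    intro z a
    apply measure_congr
    rw [Filter.eventuallyEq_set]
    filter_upwards [hXcons] with ω h2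
    simp only [Set.mem_inter_iff, Set.mem_setOf_eq]
    constructor
    · rintro ⟨hz, hx⟩; rw [hz] at h2; exact ⟨hz, h2 ▸ hx⟩
    · rintro ⟨hz, hx⟩; rw [hz] at h2; exact ⟨hz, h2.trans hx⟩
  -- conditional probability computations
  have hcancel : ∀ (z : Fin K) (q : ENNReal), q ≠ ⊤ →
      ((P {ω | Z ω = z})⁻¹ * (q * P {ω | Z ω = z})).toReal = q.toReal := by
    intro z q hq
    rw [mul_comm q, ← mul_assoc, ENNReal.inv_mul_cancel (hPZ0 z) (hPZtop z), one_mul]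
  have hcond2 : ∀ (z : Fin K) (a b : Bool),
      condPr P ({ω | X ω = a} ∩ {ω | Y ω = b}) {ω | Z ω = z}
        = (P ({ω | XZ z ω = a} ∩ {ω | W a ω = b})).toReal := by
    intro z a b
    unfold condPr
    rw [cond_apply (hZmeas z), hae2 z a b, Set.inter_comm {ω | Z ω = z}, hind2 z a b]
    exact hcancel z _ (measure_ne_top P _)
  have hcond1 : ∀ (z : Fin K) (a : Bool),
      condPr P {ω | X ω = a} {ω | Z ω = z} = (P {ω | XZ z ω = a}).toReal := by
    intro z a
    unfold condPr
    rw [cond_apply (hZmeas z), hae1 z a, Set.inter_comm {ω | Z ω = z}, hind1 z a]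
    exact hcancel z _ (measure_ne_top P _)
  -- helper : Bool dichotomy
  have hbool : ∀ x y : Bool, x ≠ y → x = !y := by decide
  -- main bound : P (W i = j) ≤ gbnd i j
  have hmain : ∀ i j : Bool, (P {ω | W i ω = j}).toReal ≤ gbnd P hK Z X Y i j := by
    intro i j
    unfold gbnd
    apply le_min
    · apply Finset.le_inf'
      intro z _
      rw [hcond2 z i j, hcond1 z (!i)]
      have hsub : {ω | W i ω = j}
          ⊆ ({ω | XZ z ω = i} ∩ {ω | W i ω = j}) ∪ {ω | XZ z ω = !i} := by
        intro ω hω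
        by_cases h : XZ z ω = i
        · exact Or.inl ⟨h, hω⟩
        · exact Or.inr (hbool _ _ h)
      have hle : P {ω | W i ω = j}
          ≤ P ({ω | XZ z ω = i} ∩ {ω | W i ω = j}) + P {ω | XZ z ω = !i} :=
        (measure_mono hsub).trans (measure_union_le _ _)
      have h2 := ENNReal.toReal_mono
        (ENNReal.add_ne_top.mpr ⟨measure_ne_top P _, measure_ne_top P _⟩) hle
      rwa [ENNReal.toReal_add (measure_ne_top P _) (measure_ne_top P _)] at h2
    · apply Finset.le_inf'
      rintro ⟨z, z'⟩ _
      simp only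
      rw [hcond2 z i j, hcond2 z (!i) false, hcond2 z' i j, hcond2 z' (!i) true]
      set S1 := {ω | XZ z ω = i} ∩ {ω | W i ω = j}
      set S2 := {ω | XZ z ω = !i} ∩ {ω | W (!i) ω = false}
      set S3 := {ω | XZ z' ω = i} ∩ {ω | W i ω = j}
      set S4 := {ω | XZ z' ω = !i} ∩ {ω | W (!i) ω = true}
      have hsub : {ω | W i ω = j} ⊆ S1 ∪ S2 ∪ S3 ∪ S4 := by
        intro ω hω
        by_cases h1 : XZ z ω = i
        · exact Or.inl (Or.inl (Or.inl ⟨h1, hω⟩))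
        · by_cases h2 : W (!i) ω = false
          · exact Or.inl (Or.inl (Or.inr ⟨hbool _ _ h1, h2⟩))
          · by_cases h3 : XZ z' ω = i
            · exact Or.inl (Or.inr ⟨h3, hω⟩)
            · exact Or.inr ⟨hbool _ _ h3, hbool _ _ h2⟩
      have hle : P {ω | W i ω = j} ≤ P S1 + P S2 + P S3 + P S4 := by
        refine (measure_mono hsub).trans ?_
        refine (measure_union_le _ _).trans ?_
        refine add_le_add_left ((measure_union_le _ _).trans ?_) _
        exact add_le_add_left (measure_union_le _ _) _
      have hne : ∀ s : Set Ω, P s ≠ ⊤ := fun s => measure_ne_top P s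
      have h2 := ENNReal.toReal_mono (by
        refine ENNReal.add_ne_top.mpr ⟨?_, hne _⟩
        refine ENNReal.add_ne_top.mpr ⟨?_, hne _⟩
        exact ENNReal.add_ne_top.mpr ⟨hne _, hne _⟩) hle
      rwa [ENNReal.toReal_add (by
            refine ENNReal.add_ne_top.mpr ⟨?_, hne _⟩
            exact ENNReal.add_ne_top.mpr ⟨hne _, hne _⟩) (hne _),
          ENNReal.toReal_add (ENNReal.add_ne_top.mpr ⟨hne _, hne _⟩) (hne _),
          ENNReal.toReal_add (hne _) (hne _)] at h2
  -- complements
  have hcompl : ∀ (V : Ω → Bool), Measurable V →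
      (P {ω | V ω = false}).toReal = 1 - (P {ω | V ω = true}).toReal := by
    intro V hV
    have hset : {ω | V ω = false} = {ω | V ω = true}ᶜ := by
      ext ω; simp
    have hm : MeasurableSet ({ω | V ω = true} : Set Ω) := hV (measurableSet_singleton true)
    rw [hset, measure_compl hm (measure_ne_top P _),
      measure_univ, ENNReal.toReal_sub_of_le prob_le_one (by simp), ENNReal.toReal_one]
  have e1 : (P {ω | W true ω = false}).toReal = 1 - (P {ω | Y₁ ω = true}).toReal := by
    simpa [W] using hcompl Y₁ hY₁
  have e0 : (P {ω | W false ω = false}).toReal = 1 - (P {ω | Y₀ ω = true}).toReal := by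
    simpa [W] using hcompl Y₀ hY₀
  have h10 := hmain true false
  have h01 := hmain false true
  have h11 := hmain true true
  have h00 := hmain false false
  rw [e1] at h10
  rw [e0] at h00
  have h01' : (P {ω | Y₀ ω = true}).toReal ≤ gbnd P hK Z X Y false true := by
    simpa [W] using h01
  have h11' : (P {ω | Y₁ ω = true}).toReal ≤ gbnd P hK Z X Y true true := by
    simpa [W] using h11
  constructor <;> linarith
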